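/- Let \eta be a unimodular complex number, \alpha > -1, k a positive integer, b \in \mathbb{D}, and \phi an analytic self-map of the unit disk with \phi(0) = b. If (1-\eta b z)^{k+\alpha+2}(1-\eta w \phi(z))^{k+\alpha+2} = (1-\eta b w)^{k+\alpha+2}(1-\eta \phi(w) z)^{k+\alpha+2} holds for all z, w in the unit disk, then \phi(z) = b + c z/(1 - \eta b z) for all z, where c = \phi'(0). -/

import Mathlib

open Metric Complex Topology

/-! Write `s = k + α + 2` and `D = 1 - ηbz`. Differentiating the identity in `w` at `w = 0`,
where every factor except `D ^ s` and `(1 - ηφ(w)z) ^ s` equals `1`, gives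
`D ^ s · sηφ(z) = D ^ s · sηb + D ^ (s - 1) · sηφ'(0)z`.
Since `s ≠ 0`, `η ≠ 0` and `D` lies in the slit plane, this can be divided by `sη D ^ (s - 1)`,
leaving `D φ(z) = D b + φ'(0) z`. -/

lemma Complex.one_sub_mem_slitPlane {u : ℂ} (hu : ‖u‖ < 1) : 1 - u ∈ slitPlane := by
  simpa [sub_eq_add_neg] using mem_slitPlane_of_norm_lt_one (z := -u) (by simpa using hu)

lemma HasDerivAt.one_sub_cpow_const {g : ℂ → ℂ} {g' x : ℂ} (s : ℂ) (hg : HasDerivAt g g' x)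
    (hx : 1 - g x ∈ slitPlane) :
    HasDerivAt (fun w => (1 - g w) ^ s) (-(s * (1 - g x) ^ (s - 1) * g')) x := by
  simpa using ((hasDerivAt_const x 1).sub hg).cpow_const hx

lemma Complex.mul_eq_mul_add_of_cpow_eq {s D p q r : ℂ} (hD : D ≠ 0)
    (h : D ^ s * p = D ^ s * q + D ^ (s - 1) * r) : D * p = D * q + r := by
  have hpow : D ^ s = D ^ (s - 1) * D := by
    rw [cpow_sub _ _ hD, cpow_one, div_mul_cancel₀ _ hD]
  have hpow0 : D ^ (s - 1) ≠ 0 := by simp [cpow_eq_zero_iff, hD]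
  apply mul_left_cancel₀ hpow0
  linear_combination h - (p - q) * hpow

theorem stmt7_general (η : ℂ) (hη : ‖η‖ = 1) (α : ℝ) (hα : -1 < α) (k : ℕ)
    (b : ℂ) (hb : b ∈ ball (0 : ℂ) 1)
    (φ : ℂ → ℂ) (hφ : DifferentiableOn ℂ φ (ball 0 1))
    (hφ0 : φ 0 = b)
    (hid : ∀ z ∈ ball (0 : ℂ) 1, ∀ w ∈ ball (0 : ℂ) 1,
      (1 - η * b * z) ^ (((k : ℝ) + α + 2 : ℝ) : ℂ) *
          (1 - η * w * φ z) ^ (((k : ℝ) + α + 2 : ℝ) : ℂ)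
        = (1 - η * b * w) ^ (((k : ℝ) + α + 2 : ℝ) : ℂ) *
          (1 - η * φ w * z) ^ (((k : ℝ) + α + 2 : ℝ) : ℂ)) :
    ∀ z ∈ ball (0 : ℂ) 1, φ z = b + deriv φ 0 * z / (1 - η * b * z) := by
  intro z hz
  set s : ℂ := (((k : ℝ) + α + 2 : ℝ) : ℂ)
  set D := 1 - η * b * z with hD_def
  have hs : s ≠ 0 := ofReal_ne_zero.mpr (by linarith [k.cast_nonneg (α := ℝ)])
  have hη0 : η ≠ 0 := by rintro rfl; simp at hη
  have hDslit : D ∈ slitPlane := by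
    apply one_sub_mem_slitPlane
    simp only [mem_ball_zero_iff] at hb hz
    rw [norm_mul, norm_mul, hη, one_mul]
    exact mul_lt_one_of_nonneg_of_lt_one_left (norm_nonneg b) hb hz.le
  have hD : D ≠ 0 := slitPlane_ne_zero hDslit
  have h0 : ball (0 : ℂ) 1 ∈ 𝓝 0 := ball_mem_nhds 0 one_pos
  have hφ' : HasDerivAt φ (deriv φ 0) 0 := (hφ.differentiableAt h0).hasDerivAt
  have hL := ((((hasDerivAt_id (0 : ℂ)).const_mul η).mul_const (φ z)).one_sub_cpow_const s
    (by simp)).const_mul (D ^ s)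
  have hR := (((hasDerivAt_id (0 : ℂ)).const_mul (η * b)).one_sub_cpow_const s (by simp)).mul
    ((hφ'.const_mul η |>.mul_const z).one_sub_cpow_const s (by simpa [hφ0] using hDslit))
  have hLR : (fun w => (1 - η * b * w) ^ s * (1 - η * φ w * z) ^ s)
      =ᶠ[𝓝 0] fun w => D ^ s * (1 - η * w * φ z) ^ s :=
    Filter.eventually_of_mem h0 fun w hw => (hid z hz w hw).symm
  have hderiv := (hL.congr_of_eventuallyEq hLR).unique hR
  simp only [id, mul_zero, zero_mul, sub_zero, one_cpow, mul_one, one_mul, hφ0, ← hD_def]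
    at hderiv
  have key : D * φ z = D * b + deriv φ 0 * z := mul_eq_mul_add_of_cpow_eq hD <|
    mul_left_cancel₀ (neg_ne_zero.mpr (mul_ne_zero hs hη0)) (by linear_combination hderiv)
  rw [← sub_eq_iff_eq_add', eq_div_iff hD]
  linear_combination key

/-- If `(1-ηbz)^{k+α+2}(1-ηwφ(z))^{k+α+2} = (1-ηbw)^{k+α+2}(1-ηφ(w)z)^{k+α+2}`
for all `z, w ∈ 𝔻`, where `φ(0) = b`, then `φ(z) = b + cz/(1-ηbz)` with `c = φ'(0)`. -/
theorem stmt7 (η : ℂ) (hη : ‖η‖ = 1) (α : ℝ) (hα : -1 < α) (k : ℕ) (hk : 1 ≤ k)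
    (b : ℂ) (hb : b ∈ ball (0 : ℂ) 1)
    (φ : ℂ → ℂ) (hφ : DifferentiableOn ℂ φ (ball 0 1))
    (hφm : ∀ z ∈ ball (0 : ℂ) 1, φ z ∈ ball (0 : ℂ) 1)
    (hφ0 : φ 0 = b)
    (hid : ∀ z ∈ ball (0 : ℂ) 1, ∀ w ∈ ball (0 : ℂ) 1,
      (1 - η * b * z) ^ (((k : ℝ) + α + 2 : ℝ) : ℂ) *
          (1 - η * w * φ z) ^ (((k : ℝ) + α + 2 : ℝ) : ℂ)
        = (1 - η * b * w) ^ (((k : ℝ) + α + 2 : ℝ) : ℂ) *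
          (1 - η * φ w * z) ^ (((k : ℝ) + α + 2 : ℝ) : ℂ)) :
    ∀ z ∈ ball (0 : ℂ) 1, φ z = b + deriv φ 0 * z / (1 - η * b * z) :=
  stmt7_general η hη α hα k b hb φ hφ hφ0 hid
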